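/- arXiv:1901.03182 — 2 statements merged into one kernel-verified Lean document; each statement's English description precedes it below -/
import Mathlib

section
/- Assume H1 and the prior H2, and let Č_γ(z) := Σ_{δ∈Δ} ω_δ ∫_{ℝ^p} q_{δ,θ_δ}(z) N(0, B_δ)(dθ) denote the normalizing constant of the quasi-posterior Π̌(· | z). Then for every z in the event 𝓔 (in particular, whenever v̄(δ⋆) ≤ κ̄), Č_γ(z) ≥ ω_{δ⋆} q_{δ⋆,θ⋆}(z) e^{−(ρ²/2)‖θ⋆‖₂²} (ρ² / (nκ̄/λ + ρ²))^{s⋆/2}. -/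
open MeasureTheory Real

/-- Number of `true` coordinates (`‖δ‖₀` for `δ ∈ {0,1}^d`, resp. `‖T_δ‖₀`). -/
def card0 {d : ℕ} (δ : Fin d → Bool) : ℕ := (Finset.univ.filter fun j => δ j = true).card

/-- The sparsity structure `δ⋆` of `θ⋆`: `δ⋆_j = 𝟙(|θ⋆_j| > 0)`. -/
noncomputable def deltaStar {p : ℕ} (θs : Fin p → ℝ) : Fin p → Bool :=
  fun j => decide (θs j ≠ 0)

/-- The quadratic form `u ↦ u′(M_δ′M_δ)u = ‖W_δ′ X u‖₂²`, where `M_δ = W_δ′X` and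
`W_δ` keeps the columns `ℓ` of `W` with `(T_δ)_ℓ = 1`. -/
def quadForm {n p q : ℕ} (T : (Fin p → Bool) → Fin q → Bool)
    (X : Matrix (Fin n) (Fin p) ℝ) (W : Matrix (Fin n) (Fin q) ℝ)
    (δ : Fin p → Bool) (u : Fin p → ℝ) : ℝ :=
  ∑ ℓ, if T δ ℓ then (∑ i, W i ℓ * (∑ j, X i j * u j)) ^ 2 else 0

/-- Restricted maximal eigenvalue `v̄(δ)` of `M_δ′M_δ/n` over `ℝ^p_δ`. -/
noncomputable def vbar (n : ℕ) {p q : ℕ} (T : (Fin p → Bool) → Fin q → Bool)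
    (X : Matrix (Fin n) (Fin p) ℝ) (W : Matrix (Fin n) (Fin q) ℝ)
    (δ : Fin p → Bool) : ℝ :=
  sSup {r | ∃ u : Fin p → ℝ, u ≠ 0 ∧ (∀ j, δ j = false → u j = 0) ∧
    r = quadForm T X W δ u / ((n : ℝ) * ∑ j, u j ^ 2)}

/-- Restricted minimal eigenvalue `v̲(δ)` of `M_δ′M_δ/n` over `ℝ^p_δ`. -/
noncomputable def vlow (n : ℕ) {p q : ℕ} (T : (Fin p → Bool) → Fin q → Bool)
    (X : Matrix (Fin n) (Fin p) ℝ) (W : Matrix (Fin n) (Fin q) ℝ)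
    (δ : Fin p → Bool) : ℝ :=
  sInf {r | ∃ u : Fin p → ℝ, u ≠ 0 ∧ (∀ j, δ j = false → u j = 0) ∧
    r = quadForm T X W δ u / ((n : ℝ) * ∑ j, u j ^ 2)}

/-- `t̄ = max_{‖δ‖₀ ≤ s̄} ‖T_δ‖₀`: the maximal number of selected instruments. -/
def tmax (p q sbar : ℕ) (T : (Fin p → Bool) → Fin q → Bool) : ℕ :=
  (Finset.univ.filter fun δ : Fin p → Bool => card0 δ ≤ sbar).sup fun δ => card0 (T δ)

/-- The event `𝓔`. -/
def eventE (n p q sbar : ℕ) (σ0 κ1 κb κl : ℝ)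
    (T : (Fin p → Bool) → Fin q → Bool) (θs : Fin p → ℝ)
    (y : Fin n → ℝ) (X : Matrix (Fin n) (Fin p) ℝ) (W : Matrix (Fin n) (Fin q) ℝ) : Prop :=
  (∀ k, |∑ i, W i k * (y i - ∑ j, X i j * θs j)|
      ≤ σ0 * Real.sqrt (2 * Real.log ((p : ℝ) * (q : ℝ)))) ∧
  vbar n T X W (deltaStar θs) ≤ κb ∧
  (∀ δ : Fin p → Bool, card0 δ ≤ sbar → κl ≤ vlow n T X W δ) ∧
  (∀ δ : Fin p → Bool, card0 δ ≤ sbar → ∀ j : Fin p,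
    (1 / Real.sqrt (n : ℝ)) *
        Real.sqrt (∑ ℓ, (if T δ ℓ then ∑ i, W i ℓ * X i j else 0) ^ 2) ≤ κ1)

/-- The quasi-likelihood
`q_{δ,θ}(z) = exp(−(1/2)(y−Xθ)′WΛ_δW′(y−Xθ))`, `Λ_δ = (1/λ)diag(T_δ)`, i.e.
`q_{δ,θ}(z) = exp(−(1/(2λ)) Σ_{ℓ : (T_δ)_ℓ = 1} ⟨W_ℓ, y − Xθ⟩²)`. -/
noncomputable def qlik {n p q : ℕ} (lam : ℝ) (T : (Fin p → Bool) → Fin q → Bool)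
    (y : Fin n → ℝ) (X : Matrix (Fin n) (Fin p) ℝ) (W : Matrix (Fin n) (Fin q) ℝ)
    (δ : Fin p → Bool) (θ : Fin p → ℝ) : ℝ :=
  Real.exp (-(1 / (2 * lam)) *
    ∑ ℓ, if T δ ℓ then (∑ i, W i ℓ * (y i - ∑ j, X i j * θ j)) ^ 2 else 0)

/-- `θ_δ`: the vector `θ` with coordinates outside `δ` set to `0`. -/
def restr {d : ℕ} (δ : Fin d → Bool) (θ : Fin d → ℝ) : Fin d → ℝ :=
  fun j => if δ j then θ j else 0

/-- Density at `x` of the centered real Gaussian with variance `v`. -/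
noncomputable def gpdf (v x : ℝ) : ℝ :=
  Real.exp (-(x ^ 2) / (2 * v)) / Real.sqrt (2 * Real.pi * v)

/-- Density of the prior `N(0, B_δ)`: independent coordinates, `N(0,1/ρ²)` where
`δ_j = 1` and `N(0,γ)` where `δ_j = 0`. -/
noncomputable def gdens {p : ℕ} (ρ γ : ℝ) (δ : Fin p → Bool) (θ : Fin p → ℝ) : ℝ :=
  ∏ j, gpdf (if δ j then 1 / ρ ^ 2 else γ) (θ j)

/-- Unnormalized spike-and-slab model weights:
`ω_δ ∝ 𝗊^{‖δ‖₀}(1−𝗊)^{p−‖δ‖₀} 𝟙{‖δ‖₀ ≤ s̄}` with `𝗊 = p^{−(1+u)}`. -/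
noncomputable def priorw (p sbar : ℕ) (u : ℝ) (δ : Fin p → Bool) : ℝ :=
  if card0 δ ≤ sbar then
    ((p : ℝ) ^ (-(1 + u))) ^ (card0 δ) * (1 - (p : ℝ) ^ (-(1 + u))) ^ (p - card0 δ)
  else 0

/-- The quasi-posterior distribution
`Π̌(δ, dθ | z) ∝ ω_δ q_{δ,θ_δ}(z) N(0,B_δ)(dθ)` on `{0,1}^p × ℝ^p`,
evaluated on a set `S`. -/
noncomputable def postProb (n p q sbar : ℕ) (u lam ρ γ : ℝ)
    (T : (Fin p → Bool) → Fin q → Bool)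
    (y : Fin n → ℝ) (X : Matrix (Fin n) (Fin p) ℝ) (W : Matrix (Fin n) (Fin q) ℝ)
    (S : Set ((Fin p → Bool) × (Fin p → ℝ))) : ℝ :=
  (∑ δ : Fin p → Bool, priorw p sbar u δ *
      ∫ θ in {θ : Fin p → ℝ | (δ, θ) ∈ S},
        qlik lam T y X W δ (restr δ θ) * gdens ρ γ δ θ) /
  (∑ δ : Fin p → Bool, priorw p sbar u δ *
      ∫ θ : Fin p → ℝ, qlik lam T y X W δ (restr δ θ) * gdens ρ γ δ θ)

/-- Normalized prior weights `ω_δ`. -/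
noncomputable def priorOmega (p sbar : ℕ) (u : ℝ) (δ : Fin p → Bool) : ℝ :=
  priorw p sbar u δ / ∑ δ' : Fin p → Bool, priorw p sbar u δ'


/-!
Only the term `δ = δ⋆` of the sum is kept. Write `F θ = q_{δ⋆,θ_{δ⋆}}(z) N(0, B_{δ⋆})(θ)`.
Since `θ⋆` is supported on `δ⋆`, the terms linear in `h` cancel in `F(θ⋆ + h) F(θ⋆ - h)`,
which equals `(q_{δ⋆,θ⋆}(z) e^{-(ρ²/2)‖θ⋆‖²} N(0, B_{δ⋆})(h))² e^{-h′M′Mh/λ}`, and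
`v̄(δ⋆) ≤ κ̄` bounds the last factor below by `e^{-nκ̄‖h_{δ⋆}‖²/λ}`. By translation and reflection
invariance of Lebesgue measure and AM–GM, `∫ F = ∫ (F(θ⋆ + h) + F(θ⋆ - h))/2 ≥ ∫ √(F(θ⋆ + h) F(θ⋆ - h))`,
and the right-hand side is a Gaussian integral whose slab coordinates contribute
`(ρ² / (nκ̄/λ + ρ²))^{1/2}` each.
-/

lemma gpdf_nonneg (v x : ℝ) : 0 ≤ gpdf v x := by unfold gpdf; positivity

lemma exp_mul_gpdf_eq (b v x : ℝ) (hv : v ≠ 0) :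
    exp (-(b / 2) * x ^ 2) * gpdf v x =
      exp (-((1 + b * v) / (2 * v)) * x ^ 2) / √(2 * π * v) := by
  rw [gpdf, mul_div_assoc', ← exp_add]
  congr 3
  field_simp
  ring

lemma integrable_exp_mul_gpdf {b v : ℝ} (hv : 0 < v) (hbv : 0 < 1 + b * v) :
    Integrable fun x => exp (-(b / 2) * x ^ 2) * gpdf v x := by
  simp_rw [exp_mul_gpdf_eq b v _ hv.ne']
  exact (integrable_exp_neg_mul_sq (by positivity)).div_const _

lemma integral_exp_mul_gpdf {b v : ℝ} (hv : 0 < v) (hbv : 0 < 1 + b * v) :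
    ∫ x, exp (-(b / 2) * x ^ 2) * gpdf v x = (√(1 + b * v))⁻¹ := by
  simp_rw [exp_mul_gpdf_eq b v _ hv.ne']
  rw [integral_div, integral_gaussian, div_div_eq_mul_div, ← sqrt_inv,
    div_eq_iff (by positivity), ← sqrt_mul (by positivity)]
  congr 1
  field_simp

lemma gpdf_add_mul_gpdf_sub (v a x : ℝ) :
    gpdf v (a + x) * gpdf v (a - x) = (exp (-a ^ 2 / (2 * v)) * gpdf v x) ^ 2 := by
  have hexp : exp (-(a + x) ^ 2 / (2 * v)) * exp (-(a - x) ^ 2 / (2 * v)) =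
      (exp (-a ^ 2 / (2 * v)) * exp (-x ^ 2 / (2 * v))) ^ 2 := by
    rw [← exp_add, ← exp_add, ← exp_nat_mul]
    congr 1
    push_cast
    ring
  simp only [gpdf]
  rw [div_mul_div_comm, hexp]
  ring

section ProductGaussian

variable {ι : Type*} [Fintype ι] {b v : ι → ℝ}

lemma integrable_prod_exp_mul_gpdf (hv : ∀ i, 0 < v i) (hbv : ∀ i, 0 < 1 + b i * v i) :
    Integrable fun x : ι → ℝ => ∏ i, exp (-(b i / 2) * x i ^ 2) * gpdf (v i) (x i) :=
  Integrable.fintype_prod (f := fun i x => exp (-(b i / 2) * x ^ 2) * gpdf (v i) x)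
    fun i => integrable_exp_mul_gpdf (hv i) (hbv i)

lemma integral_prod_exp_mul_gpdf (hv : ∀ i, 0 < v i) (hbv : ∀ i, 0 < 1 + b i * v i) :
    ∫ x : ι → ℝ, ∏ i, exp (-(b i / 2) * x i ^ 2) * gpdf (v i) (x i) =
      ∏ i, (√(1 + b i * v i))⁻¹ := by
  rw [integral_fintype_prod_volume_eq_prod (fun i x => exp (-(b i / 2) * x ^ 2) * gpdf (v i) x)]
  exact Finset.prod_congr rfl fun i _ => integral_exp_mul_gpdf (hv i) (hbv i)

end ProductGaussian

section Prior

variable {p : ℕ} {ρ γ : ℝ}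

lemma prior_variance_pos (hρ : 0 < ρ) (hγ : 0 < γ) (c : Bool) :
    0 < if c then 1 / ρ ^ 2 else γ := by
  cases c <;> simp [hρ, hγ]

lemma gdens_nonneg (δ : Fin p → Bool) (θ : Fin p → ℝ) : 0 ≤ gdens ρ γ δ θ :=
  Finset.prod_nonneg fun _ _ => gpdf_nonneg _ _

lemma continuous_gdens (δ : Fin p → Bool) : Continuous (gdens ρ γ δ) := by
  unfold gdens gpdf
  fun_prop

lemma integrable_gdens (hρ : 0 < ρ) (hγ : 0 < γ) (δ : Fin p → Bool) :
    Integrable (gdens ρ γ δ) := by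
  have h := integrable_prod_exp_mul_gpdf (b := 0)
    (fun j => prior_variance_pos hρ hγ (δ j)) (by simp)
  simp only [Pi.zero_apply, zero_div, neg_zero, zero_mul, exp_zero, one_mul] at h
  exact h

lemma exp_restr_mul_gdens (b : ℝ) (δ : Fin p → Bool) (θ : Fin p → ℝ) :
    exp (-(b / 2) * ∑ j, restr δ θ j ^ 2) * gdens ρ γ δ θ =
      ∏ j, exp (-((if δ j then b else 0) / 2) * θ j ^ 2) *
        gpdf (if δ j then 1 / ρ ^ 2 else γ) (θ j) := by
  rw [gdens, Finset.mul_sum, exp_sum, ← Finset.prod_mul_distrib]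
  refine Finset.prod_congr rfl fun j _ => ?_
  cases hj : δ j <;> simp [restr, hj]

lemma one_add_tilt_mul_prior_variance_pos (hρ : 0 < ρ) (hγ : 0 < γ) {b : ℝ} (hb : 0 ≤ b)
    (c : Bool) : 0 < 1 + (if c then b else 0) * (if c then 1 / ρ ^ 2 else γ) := by
  cases c <;> simp only [Bool.false_eq_true, if_true, if_false] <;> positivity

lemma integrable_exp_restr_mul_gdens (hρ : 0 < ρ) (hγ : 0 < γ) {b : ℝ} (hb : 0 ≤ b)
    (δ : Fin p → Bool) :
    Integrable fun θ => exp (-(b / 2) * ∑ j, restr δ θ j ^ 2) * gdens ρ γ δ θ := by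
  simp_rw [exp_restr_mul_gdens]
  exact integrable_prod_exp_mul_gpdf (fun j => prior_variance_pos hρ hγ (δ j))
    fun j => one_add_tilt_mul_prior_variance_pos hρ hγ hb (δ j)

lemma integral_exp_restr_mul_gdens (hρ : 0 < ρ) (hγ : 0 < γ) {b : ℝ} (hb : 0 ≤ b)
    (δ : Fin p → Bool) :
    ∫ θ, exp (-(b / 2) * ∑ j, restr δ θ j ^ 2) * gdens ρ γ δ θ =
      (ρ ^ 2 / (b + ρ ^ 2)) ^ ((card0 δ : ℝ) / 2) := by
  have hfactor : ∀ j, (√(1 + (if δ j then b else 0) * (if δ j then 1 / ρ ^ 2 else γ)))⁻¹ =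
      if δ j then √(ρ ^ 2 / (b + ρ ^ 2)) else 1 := fun j => by
    cases δ j
    · simp
    · rw [if_pos rfl, if_pos rfl, if_pos rfl, ← sqrt_inv]
      congr 1
      field_simp
      ring
  simp_rw [exp_restr_mul_gdens]
  rw [integral_prod_exp_mul_gpdf (fun j => prior_variance_pos hρ hγ (δ j))
    fun j => one_add_tilt_mul_prior_variance_pos hρ hγ hb (δ j)]
  simp_rw [hfactor]
  rw [Finset.prod_ite, Finset.prod_const, Finset.prod_const_one, mul_one, sqrt_eq_rpow,
    ← rpow_natCast, ← rpow_mul (by positivity)]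
  congr 1
  simp only [card0]
  ring

lemma gdens_add_mul_gdens_sub {δ : Fin p → Bool} {θ : Fin p → ℝ}
    (hθ : ∀ j, δ j = false → θ j = 0) (h : Fin p → ℝ) :
    gdens ρ γ δ (θ + h) * gdens ρ γ δ (θ - h) =
      (exp (-(ρ ^ 2 / 2) * ∑ j, θ j ^ 2) * gdens ρ γ δ h) ^ 2 := by
  have hexp : exp (-(ρ ^ 2 / 2) * ∑ j, θ j ^ 2) =
      ∏ j, exp (-θ j ^ 2 / (2 * if δ j then 1 / ρ ^ 2 else γ)) := by
    rw [Finset.mul_sum, exp_sum]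
    refine Finset.prod_congr rfl fun j _ => ?_
    cases hj : δ j
    · simp [hθ j hj]
    · simp only [if_true]
      congr 1
      field_simp
  rw [gdens, gdens, gdens, ← Finset.prod_mul_distrib, hexp, ← Finset.prod_mul_distrib,
    ← Finset.prod_pow]
  exact Finset.prod_congr rfl fun j _ => gpdf_add_mul_gpdf_sub _ _ _

end Prior

section QuadForm

variable {n p q : ℕ} (T : (Fin p → Bool) → Fin q → Bool)
  (X : Matrix (Fin n) (Fin p) ℝ) (W : Matrix (Fin n) (Fin q) ℝ) (δ : Fin p → Bool)

lemma quadForm_nonneg (u : Fin p → ℝ) : 0 ≤ quadForm T X W δ u :=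
  Finset.sum_nonneg fun _ _ => by split_ifs <;> positivity

lemma quadForm_le_sum_sq_mul (u : Fin p → ℝ) :
    quadForm T X W δ u ≤ (∑ ℓ, ∑ j, (∑ i, W i ℓ * X i j) ^ 2) * ∑ j, u j ^ 2 := by
  rw [quadForm, Finset.sum_mul]
  refine Finset.sum_le_sum fun ℓ _ => ?_
  split_ifs
  · have hM : ∑ i, W i ℓ * ∑ j, X i j * u j = ∑ j, (∑ i, W i ℓ * X i j) * u j := by
      simp_rw [Finset.mul_sum, Finset.sum_mul, mul_assoc]
      exact Finset.sum_comm
    rw [hM]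
    exact Finset.sum_mul_sq_le_sq_mul_sq _ _ _
  · positivity

lemma vbar_nonneg : 0 ≤ vbar n T X W δ :=
  sSup_nonneg <| by
    rintro _ ⟨u, -, -, rfl⟩
    exact div_nonneg (quadForm_nonneg T X W δ u) (by positivity)

variable {T X W δ}

lemma quadForm_le_of_vbar_le (hn : 0 < n) {κ : ℝ} (hv : vbar n T X W δ ≤ κ)
    {u : Fin p → ℝ} (hu : ∀ j, δ j = false → u j = 0) :
    quadForm T X W δ u ≤ n * κ * ∑ j, u j ^ 2 := by
  have hden : ∀ w : Fin p → ℝ, w ≠ 0 → 0 < (n : ℝ) * ∑ j, w j ^ 2 := fun w hw => by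
    obtain ⟨j, hj⟩ := Function.ne_iff.1 hw
    rw [Pi.zero_apply] at hj
    have := Finset.sum_pos' (fun i _ => sq_nonneg (w i)) ⟨j, Finset.mem_univ _, by positivity⟩
    positivity
  have hbdd : BddAbove {r | ∃ w : Fin p → ℝ, w ≠ 0 ∧ (∀ j, δ j = false → w j = 0) ∧
      r = quadForm T X W δ w / ((n : ℝ) * ∑ j, w j ^ 2)} := by
    refine ⟨(∑ ℓ, ∑ j, (∑ i, W i ℓ * X i j) ^ 2) / n, ?_⟩
    rintro _ ⟨w, hw, -, rfl⟩
    rw [div_le_div_iff₀ (hden w hw) (by positivity)]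
    have := mul_le_mul_of_nonneg_right (quadForm_le_sum_sq_mul T X W δ w) (Nat.cast_nonneg n)
    linarith
  rcases eq_or_ne u 0 with rfl | hu0
  · simp [quadForm]
  calc quadForm T X W δ u
      = quadForm T X W δ u / (n * ∑ j, u j ^ 2) * (n * ∑ j, u j ^ 2) :=
        (div_mul_cancel₀ _ (hden u hu0).ne').symm
    _ ≤ κ * (n * ∑ j, u j ^ 2) :=
        mul_le_mul_of_nonneg_right ((le_csSup hbdd ⟨u, hu0, hu, rfl⟩).trans hv) (hden u hu0).le
    _ = n * κ * ∑ j, u j ^ 2 := by ring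

end QuadForm

section QuasiLikelihood

variable {n p q : ℕ} {lam : ℝ} {T : (Fin p → Bool) → Fin q → Bool}
  {y : Fin n → ℝ} {X : Matrix (Fin n) (Fin p) ℝ} {W : Matrix (Fin n) (Fin q) ℝ} {δ : Fin p → Bool}

lemma qlik_nonneg (θ : Fin p → ℝ) : 0 ≤ qlik lam T y X W δ θ := (exp_pos _).le

lemma qlik_le_one (hlam : 0 ≤ lam) (θ : Fin p → ℝ) : qlik lam T y X W δ θ ≤ 1 := by
  rw [qlik, exp_le_one_iff]
  refine mul_nonpos_of_nonpos_of_nonneg (by simp only [neg_nonpos]; positivity) ?_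
  exact Finset.sum_nonneg fun _ _ => by split_ifs <;> positivity

lemma continuous_qlik : Continuous (qlik lam T y X W δ) := by
  unfold qlik
  refine continuous_exp.comp (continuous_const.mul (continuous_finsetSum _ fun ℓ _ => ?_))
  split_ifs <;> fun_prop

lemma qlik_add_mul_qlik_sub (θ u : Fin p → ℝ) :
    qlik lam T y X W δ (θ + u) * qlik lam T y X W δ (θ - u) =
      qlik lam T y X W δ θ ^ 2 * exp (-(1 / lam) * quadForm T X W δ u) := by
  set r := fun ℓ => ∑ i, W i ℓ * (y i - ∑ j, X i j * θ j)
  set m := fun ℓ => ∑ i, W i ℓ * ∑ j, X i j * u j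
  have hadd : ∀ ℓ, ∑ i, W i ℓ * (y i - ∑ j, X i j * (θ + u) j) = r ℓ - m ℓ := fun ℓ => by
    simp only [r, m, Pi.add_apply, mul_add, mul_sub, Finset.sum_add_distrib, Finset.sum_sub_distrib]
    ring
  have hsub : ∀ ℓ, ∑ i, W i ℓ * (y i - ∑ j, X i j * (θ - u) j) = r ℓ + m ℓ := fun ℓ => by
    simp only [r, m, Pi.sub_apply, mul_sub, Finset.sum_sub_distrib]
    ring
  have hsq : (∑ ℓ, if T δ ℓ then (r ℓ - m ℓ) ^ 2 else 0) + (∑ ℓ, if T δ ℓ then (r ℓ + m ℓ) ^ 2 else 0)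
      = 2 * (∑ ℓ, if T δ ℓ then r ℓ ^ 2 else 0) + 2 * quadForm T X W δ u := by
    rw [quadForm, Finset.mul_sum, Finset.mul_sum, ← Finset.sum_add_distrib, ← Finset.sum_add_distrib]
    exact Finset.sum_congr rfl fun ℓ _ => by split_ifs <;> ring
  simp only [qlik, hadd, hsub, ← exp_add, ← exp_nat_mul]
  congr 1
  linear_combination (-(1 / (2 * lam))) * hsq

end QuasiLikelihood

lemma integral_le_of_sq_le_mul_add_sub {G : Type*} [MeasurableSpace G] [AddGroup G]
    [MeasurableAdd G] [MeasurableNeg G] {μ : Measure G} [μ.IsNegInvariant] [μ.IsAddLeftInvariant]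
    {f g : G → ℝ} (a : G) (hf : Integrable f μ) (hg : Integrable g μ) (hf0 : ∀ x, 0 ≤ f x)
    (hgf : ∀ x, g x ^ 2 ≤ f (a + x) * f (a - x)) :
    ∫ x, g x ∂μ ≤ ∫ x, f x ∂μ := by
  have hadd := hf.comp_add_left a
  have hsub := hf.comp_sub_left a
  have hamgm : ∀ x, g x ≤ (f (a + x) + f (a - x)) / 2 := fun x => by
    nlinarith [hgf x, sq_nonneg (f (a + x) - f (a - x)), hf0 (a + x), hf0 (a - x)]
  calc ∫ x, g x ∂μ ≤ ∫ x, (f (a + x) + f (a - x)) / 2 ∂μ :=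
        integral_mono hg ((hadd.add hsub).div_const 2) hamgm
    _ = ∫ x, f x ∂μ := by
        rw [integral_div, integral_add hadd hsub, integral_add_left_eq_self,
          integral_sub_left_eq_self]
        ring

lemma priorw_nonneg (p sbar : ℕ) {u : ℝ} (hu : 0 ≤ 1 + u) (δ : Fin p → Bool) :
    0 ≤ priorw p sbar u δ := by
  have hq0 : 0 ≤ (p : ℝ) ^ (-(1 + u)) := rpow_nonneg (Nat.cast_nonneg p) _
  have hq1 : (p : ℝ) ^ (-(1 + u)) ≤ 1 := by
    rcases p.eq_zero_or_pos with rfl | hp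
    · simpa using zero_rpow_le_one _
    · exact rpow_le_one_of_one_le_of_nonpos (by exact_mod_cast hp) (by linarith)
  unfold priorw
  split_ifs
  · exact mul_nonneg (pow_nonneg hq0 _) (pow_nonneg (sub_nonneg.2 hq1) _)
  · exact le_rfl

lemma priorOmega_nonneg (p sbar : ℕ) {u : ℝ} (hu : 0 ≤ 1 + u) (δ : Fin p → Bool) :
    0 ≤ priorOmega p sbar u δ :=
  div_nonneg (priorw_nonneg p sbar hu δ) (Finset.sum_nonneg fun δ' _ => priorw_nonneg p sbar hu δ')

section Integral

variable {n p q : ℕ} {lam ρ γ : ℝ} {T : (Fin p → Bool) → Fin q → Bool}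
  {y : Fin n → ℝ} {X : Matrix (Fin n) (Fin p) ℝ} {W : Matrix (Fin n) (Fin q) ℝ} {δ : Fin p → Bool}

lemma restr_add_of_support {θ : Fin p → ℝ} (hθ : ∀ j, δ j = false → θ j = 0) (h : Fin p → ℝ) :
    restr δ (θ + h) = θ + restr δ h := by
  funext j
  cases hj : δ j <;> simp [restr, hj, hθ j]

lemma restr_sub_of_support {θ : Fin p → ℝ} (hθ : ∀ j, δ j = false → θ j = 0) (h : Fin p → ℝ) :
    restr δ (θ - h) = θ - restr δ h := by
  funext j
  cases hj : δ j <;> simp [restr, hj, hθ j]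

lemma continuous_restr : Continuous (restr δ) :=
  continuous_pi fun j => by
    cases hj : δ j <;> simp [restr, hj, continuous_apply, continuous_const]

lemma integrable_qlik_restr_mul_gdens (hlam : 0 ≤ lam) (hρ : 0 < ρ) (hγ : 0 < γ) :
    Integrable fun θ => qlik lam T y X W δ (restr δ θ) * gdens ρ γ δ θ := by
  refine (integrable_gdens hρ hγ δ).mono'
    ((continuous_qlik.comp continuous_restr).mul (continuous_gdens δ)).aestronglyMeasurable
    (ae_of_all _ fun θ => ?_)
  rw [norm_of_nonneg (mul_nonneg (qlik_nonneg _) (gdens_nonneg δ θ))]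
  exact mul_le_of_le_one_left (gdens_nonneg δ θ) (qlik_le_one hlam _)

theorem le_integral_qlik_restr_mul_gdens (hn : 0 < n) (hlam : 0 < lam) (hρ : 0 < ρ) (hγ : 0 < γ)
    {θs : Fin p → ℝ} (hθs : ∀ j, δ j = false → θs j = 0) {κ : ℝ} (hv : vbar n T X W δ ≤ κ) :
    qlik lam T y X W δ θs * exp (-(ρ ^ 2 / 2) * ∑ j, θs j ^ 2) *
        (ρ ^ 2 / (n * κ / lam + ρ ^ 2)) ^ ((card0 δ : ℝ) / 2)
      ≤ ∫ θ, qlik lam T y X W δ (restr δ θ) * gdens ρ γ δ θ := by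
  have hκ : 0 ≤ κ := (vbar_nonneg T X W δ).trans hv
  have hb : 0 ≤ n * κ / lam := by positivity
  rw [← integral_exp_restr_mul_gdens hρ hγ hb δ, ← integral_const_mul]
  refine integral_le_of_sq_le_mul_add_sub θs (integrable_qlik_restr_mul_gdens hlam.le hρ hγ)
    ((integrable_exp_restr_mul_gdens hρ hγ hb δ).const_mul _) (fun θ => mul_nonneg (exp_pos _).le (gdens_nonneg δ θ)) fun h => ?_
  have hquad : exp (-(n * κ / lam / 2) * ∑ j, restr δ h j ^ 2) ^ 2 ≤
      exp (-(1 / lam) * quadForm T X W δ (restr δ h)) := by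
    rw [← exp_nat_mul, exp_le_exp]
    have := quadForm_le_of_vbar_le hn hv (u := restr δ h) fun j hj => by simp [restr, hj]
    have hl : 0 ≤ 1 / lam := by positivity
    push_cast
    linear_combination mul_le_mul_of_nonneg_left this hl
  have hreflect : qlik lam T y X W δ (restr δ (θs + h)) * gdens ρ γ δ (θs + h) *
      (qlik lam T y X W δ (restr δ (θs - h)) * gdens ρ γ δ (θs - h)) =
      (qlik lam T y X W δ θs * exp (-(ρ ^ 2 / 2) * ∑ j, θs j ^ 2) * gdens ρ γ δ h) ^ 2 *
        exp (-(1 / lam) * quadForm T X W δ (restr δ h)) := by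
    rw [restr_add_of_support hθs, restr_sub_of_support hθs, mul_mul_mul_comm,
      qlik_add_mul_qlik_sub, gdens_add_mul_gdens_sub hθs]
    ring
  rw [hreflect]
  calc _ = (qlik lam T y X W δ θs * exp (-(ρ ^ 2 / 2) * ∑ j, θs j ^ 2) * gdens ρ γ δ h) ^ 2 *
        exp (-(n * κ / lam / 2) * ∑ j, restr δ h j ^ 2) ^ 2 := by ring
    _ ≤ _ := by gcongr

end Integral

theorem stmt1_general (n p q sbar : ℕ) (hn : 0 < n)
    (u lam ρ γ σ0 κ1 κb κl : ℝ)
    (hu : 0 < u) (hlam : 0 < lam) (hρ : 0 < ρ) (hγ : 0 < γ)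
    (T : (Fin p → Bool) → Fin q → Bool) (θs : Fin p → ℝ)
    (y : Fin n → ℝ) (X : Matrix (Fin n) (Fin p) ℝ) (W : Matrix (Fin n) (Fin q) ℝ)
    (hE : eventE n p q sbar σ0 κ1 κb κl T θs y X W) :
    (∑ δ : Fin p → Bool, priorOmega p sbar u δ *
        ∫ θ : Fin p → ℝ, qlik lam T y X W δ (restr δ θ) * gdens ρ γ δ θ)
      ≥ priorOmega p sbar u (deltaStar θs) * qlik lam T y X W (deltaStar θs) θs *
          Real.exp (-(ρ ^ 2 / 2) * ∑ j, θs j ^ 2) *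
          (ρ ^ 2 / ((n : ℝ) * κb / lam + ρ ^ 2)) ^ ((card0 (deltaStar θs) : ℝ) / 2) := by
  have hu' : 0 ≤ 1 + u := by linarith
  have hθs : ∀ j, deltaStar θs j = false → θs j = 0 := fun j hj => by simpa [deltaStar] using hj
  have hterm : ∀ δ, 0 ≤ priorOmega p sbar u δ *
      ∫ θ : Fin p → ℝ, qlik lam T y X W δ (restr δ θ) * gdens ρ γ δ θ := fun δ =>
    mul_nonneg (priorOmega_nonneg p sbar hu' δ)
      (integral_nonneg fun θ => mul_nonneg (qlik_nonneg _) (gdens_nonneg δ θ))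
  calc _ = priorOmega p sbar u (deltaStar θs) * (qlik lam T y X W (deltaStar θs) θs *
          exp (-(ρ ^ 2 / 2) * ∑ j, θs j ^ 2) *
          (ρ ^ 2 / ((n : ℝ) * κb / lam + ρ ^ 2)) ^ ((card0 (deltaStar θs) : ℝ) / 2)) := by ring
    _ ≤ priorOmega p sbar u (deltaStar θs) * ∫ θ : Fin p → ℝ,
          qlik lam T y X W (deltaStar θs) (restr (deltaStar θs) θ) * gdens ρ γ (deltaStar θs) θ :=
        mul_le_mul_of_nonneg_left (le_integral_qlik_restr_mul_gdens hn hlam hρ hγ hθs hE.2.1)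
          (priorOmega_nonneg p sbar hu' _)
    _ ≤ _ := Finset.single_le_sum (fun δ _ => hterm δ) (Finset.mem_univ _)

/-- Lemma on the normalizing constant: under H1–H2, for every
`z = (y,X,W)` in the event `𝓔`, the normalizing constant
`Č_γ(z) = Σ_δ ω_δ ∫ q_{δ,θ_δ}(z) N(0,B_δ)(dθ)` satisfies
`Č_γ(z) ≥ ω_{δ⋆} q_{δ⋆,θ⋆}(z) e^{−(ρ²/2)‖θ⋆‖₂²} (ρ²/(nκ̄/λ + ρ²))^{s⋆/2}`. -/
theorem stmt1 (n p q sbar : ℕ) (hn : 0 < n) (hp : 2 ≤ p)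
    (u lam ρ γ σ0 κ1 κb κl : ℝ)
    (hu : 0 < u) (hlam : 0 < lam) (hρ : 0 < ρ) (hγ : 0 < γ)
    (T : (Fin p → Bool) → Fin q → Bool) (θs : Fin p → ℝ)
    (hsbar : card0 (deltaStar θs) ≤ sbar)
    (y : Fin n → ℝ) (X : Matrix (Fin n) (Fin p) ℝ) (W : Matrix (Fin n) (Fin q) ℝ)
    (hE : eventE n p q sbar σ0 κ1 κb κl T θs y X W) :
    (∑ δ : Fin p → Bool, priorOmega p sbar u δ *
        ∫ θ : Fin p → ℝ, qlik lam T y X W δ (restr δ θ) * gdens ρ γ δ θ)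
      ≥ priorOmega p sbar u (deltaStar θs) * qlik lam T y X W (deltaStar θs) θs *
          Real.exp (-(ρ ^ 2 / 2) * ∑ j, θs j ^ 2) *
          (ρ ^ 2 / ((n : ℝ) * κb / lam + ρ ^ 2)) ^ ((card0 (deltaStar θs) : ℝ) / 2) :=
  stmt1_general n p q sbar hn u lam ρ γ σ0 κ1 κb κl hu hlam hρ hγ T θs y X W hE
end

section
/- Let δ ∈ {0,1}^p, θ⋆ ∈ ℝ^p, ρ > 0, and r > 0. Let μ_δ denote the product measure on ℝ^p whose j-th factor is the Dirac mass at 0 if δ_j = 0 and Lebesgue measure if δ_j = 1. Then ∫_{{θ ∈ ℝ^p : ‖θ − θ⋆‖₂ ≤ r}} exp(−(ρ²/2)(‖θ‖₂² − ‖θ⋆‖₂²)) μ_δ(dθ) ≤ e^{ρ² ‖θ⋆‖₂ r} (2π/ρ²)^{‖δ‖₀/2}. -/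
open MeasureTheory Real

/-- `μ_δ`: the product measure on `ℝ^p` whose `j`-th factor is Lebesgue measure if
`δ_j = 1` and the Dirac mass at `0` if `δ_j = 0`. -/
noncomputable def muDelta {p : ℕ} (δ : Fin p → Bool) : Measure (Fin p → ℝ) :=
  Measure.pi fun j => if δ j then (volume : Measure ℝ) else Measure.dirac 0

/-!
Expanding `‖θ‖² = ‖θ⋆‖² + 2⟪θ⋆, θ - θ⋆⟫ + ‖θ - θ⋆‖²` and bounding the cross term by
Cauchy–Schwarz on the ball `‖θ - θ⋆‖ ≤ r` dominates the integrand by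
`e^{ρ²‖θ⋆‖r} e^{-(ρ²/2)‖θ - θ⋆‖²}`. The Gaussian factorises over the coordinates, so its
`μ_δ`-integral is a product of one-dimensional integrals: `√(2π/ρ²)` on Lebesgue factors and
at most `1` on Dirac factors.
-/

theorem exp_neg_mul_sq_norm_sub_sq_norm_le {E : Type*} [NormedAddCommGroup E]
    [InnerProductSpace ℝ E] {x y : E} {b r : ℝ} (hb : 0 ≤ b) (hxy : ‖x - y‖ ≤ r) :
    exp (-b * (‖x‖ ^ 2 - ‖y‖ ^ 2)) ≤ exp (2 * b * ‖y‖ * r) * exp (-b * ‖x - y‖ ^ 2) := by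
  rw [← exp_add, exp_le_exp]
  have hexpand : ‖x‖ ^ 2 = ‖y‖ ^ 2 + 2 * inner ℝ y (x - y) + ‖x - y‖ ^ 2 := by
    rw [← norm_add_sq_real, add_sub_cancel]
  have hinner : -inner ℝ y (x - y) ≤ ‖y‖ * r :=
    calc -inner ℝ y (x - y) ≤ ‖y‖ * ‖x - y‖ := (neg_le_abs _).trans (abs_real_inner_le_norm _ _)
      _ ≤ ‖y‖ * r := by gcongr
  rw [hexpand]
  nlinarith [mul_le_mul_of_nonneg_left hinner hb]

theorem norm_toLp_two_eq_sqrt_sum_sq {ι : Type*} [Fintype ι] (x : ι → ℝ) :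
    ‖WithLp.toLp 2 x‖ = sqrt (∑ i, x i ^ 2) := by
  simp [EuclideanSpace.norm_eq]

theorem sq_norm_toLp_two_eq_sum_sq {ι : Type*} [Fintype ι] (x : ι → ℝ) :
    ‖WithLp.toLp 2 x‖ ^ 2 = ∑ i, x i ^ 2 :=
  EuclideanSpace.real_norm_sq_eq _

instance (β : Bool) : SigmaFinite (if β then (volume : Measure ℝ) else Measure.dirac 0) := by
  split <;> infer_instance

section Gaussian

variable {b : ℝ} (hb : 0 < b) (c : ℝ)
include hb

theorem integrable_exp_neg_mul_sq_sub (β : Bool) :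
    Integrable (fun x => exp (-b * (x - c) ^ 2))
      (if β then (volume : Measure ℝ) else Measure.dirac 0) := by
  cases β
  · exact integrable_dirac enorm_lt_top
  · exact (integrable_exp_neg_mul_sq hb).comp_sub_right c

theorem integral_exp_neg_mul_sq_sub_le (β : Bool) :
    ∫ x, exp (-b * (x - c) ^ 2) ∂(if β then (volume : Measure ℝ) else Measure.dirac 0)
      ≤ if β then sqrt (π / b) else 1 := by
  cases β
  · simp only [Bool.false_eq_true, if_false, integral_dirac, zero_sub, even_two.neg_pow]
    exact exp_le_one_iff.mpr (mul_nonpos_of_nonpos_of_nonneg (neg_nonpos.mpr hb.le) (sq_nonneg c))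
  · exact ((integral_sub_right_eq_self (fun x => exp (-b * x ^ 2)) c).trans
      (integral_gaussian b)).le

end Gaussian

theorem prod_ite_sqrt_eq_rpow_card0 {p : ℕ} (δ : Fin p → Bool) {a : ℝ} (ha : 0 ≤ a) :
    ∏ j, (if δ j then sqrt a else 1) = a ^ ((card0 δ : ℝ) / 2) := by
  rw [Finset.prod_ite, Finset.prod_const, Finset.prod_const_one, mul_one, sqrt_eq_rpow,
    ← rpow_natCast, ← rpow_mul ha, card0]
  ring_nf

section GaussianPi

variable {p : ℕ} (δ : Fin p → Bool) {b : ℝ} (hb : 0 < b) (c : Fin p → ℝ)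
include hb

theorem integrable_muDelta_exp_neg_mul_sum_sq_sub :
    Integrable (fun θ => exp (-b * ∑ j, (θ j - c j) ^ 2)) (muDelta δ) := by
  simp_rw [Finset.mul_sum, exp_sum]
  exact Integrable.fintype_prod fun j => integrable_exp_neg_mul_sq_sub hb (c j) (δ j)

theorem integral_muDelta_exp_neg_mul_sum_sq_sub_le :
    ∫ θ, exp (-b * ∑ j, (θ j - c j) ^ 2) ∂(muDelta δ) ≤ (π / b) ^ ((card0 δ : ℝ) / 2) := by
  simp_rw [Finset.mul_sum, exp_sum]
  rw [muDelta,
    integral_fintype_prod_eq_prod (E := fun _ => ℝ) fun j x => exp (-b * (x - c j) ^ 2),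
    ← prod_ite_sqrt_eq_rpow_card0 δ (by positivity)]
  exact Finset.prod_le_prod (fun j _ => integral_nonneg fun x => (exp_pos _).le)
    fun j _ => integral_exp_neg_mul_sq_sub_le hb (c j) (δ j)

end GaussianPi

theorem stmt11_general (p : ℕ) (δ : Fin p → Bool) (θs : Fin p → ℝ) (ρ r : ℝ)
    (hρ : 0 < ρ) :
    (∫ θ in {θ : Fin p → ℝ | Real.sqrt (∑ j, (θ j - θs j) ^ 2) ≤ r},
        Real.exp (-(ρ ^ 2 / 2) * ((∑ j, θ j ^ 2) - ∑ j, θs j ^ 2)) ∂(muDelta δ))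
      ≤ Real.exp (ρ ^ 2 * Real.sqrt (∑ j, θs j ^ 2) * r)
          * (2 * Real.pi / ρ ^ 2) ^ ((card0 δ : ℝ) / 2) := by
  set b : ℝ := ρ ^ 2 / 2
  have hb : 0 < b := by positivity
  set S := {θ : Fin p → ℝ | sqrt (∑ j, (θ j - θs j) ^ 2) ≤ r}
  set C := exp (ρ ^ 2 * sqrt (∑ j, θs j ^ 2) * r)
  set G : (Fin p → ℝ) → ℝ := fun θ => exp (-b * ∑ j, (θ j - θs j) ^ 2)
  have hG : Integrable (fun θ => C * G θ) (muDelta δ) :=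
    (integrable_muDelta_exp_neg_mul_sum_sq_sub δ hb θs).const_mul C
  have hS : MeasurableSet S := measurableSet_le (by fun_prop) measurable_const
  have hbound : ∀ θ ∈ S, exp (-b * ((∑ j, θ j ^ 2) - ∑ j, θs j ^ 2)) ≤ C * G θ := by
    intro θ hθ
    have h := exp_neg_mul_sq_norm_sub_sq_norm_le hb.le (x := WithLp.toLp 2 θ)
      (y := WithLp.toLp 2 θs) (r := r) (by rwa [← WithLp.toLp_sub, norm_toLp_two_eq_sqrt_sum_sq])
    simp only [← WithLp.toLp_sub, sq_norm_toLp_two_eq_sum_sq, Pi.sub_apply] at h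
    rw [norm_toLp_two_eq_sqrt_sum_sq] at h
    convert h using 3
    ring
  calc _ ≤ ∫ θ in S, C * G θ ∂(muDelta δ) :=
        integral_mono_of_nonneg (ae_of_all _ fun _ => (exp_pos _).le) hG.integrableOn
          ((ae_restrict_iff' hS).mpr (ae_of_all _ hbound))
    _ ≤ ∫ θ, C * G θ ∂(muDelta δ) :=
        setIntegral_le_integral hG (ae_of_all _ fun _ => by positivity)
    _ = C * ∫ θ, G θ ∂(muDelta δ) := integral_const_mul ..
    _ ≤ C * (π / b) ^ ((card0 δ : ℝ) / 2) := by
        gcongr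
        exact integral_muDelta_exp_neg_mul_sum_sq_sub_le δ hb θs
    _ = C * (2 * π / ρ ^ 2) ^ ((card0 δ : ℝ) / 2) := by
        rw [div_div_eq_mul_div, mul_comm π]

/-- `∫_{‖θ−θ⋆‖₂ ≤ r} e^{−(ρ²/2)(‖θ‖₂²−‖θ⋆‖₂²)} μ_δ(dθ) ≤ e^{ρ²‖θ⋆‖₂ r} (2π/ρ²)^{‖δ‖₀/2}`. -/
theorem stmt11 (p : ℕ) (δ : Fin p → Bool) (θs : Fin p → ℝ) (ρ r : ℝ)
    (hρ : 0 < ρ) (hr : 0 < r) :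
    (∫ θ in {θ : Fin p → ℝ | Real.sqrt (∑ j, (θ j - θs j) ^ 2) ≤ r},
        Real.exp (-(ρ ^ 2 / 2) * ((∑ j, θ j ^ 2) - ∑ j, θs j ^ 2)) ∂(muDelta δ))
      ≤ Real.exp (ρ ^ 2 * Real.sqrt (∑ j, θs j ^ 2) * r)
          * (2 * Real.pi / ρ ^ 2) ^ ((card0 δ : ℝ) / 2) :=
  stmt11_general p δ θs ρ r hρ
end
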